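/- arXiv:math/0608104 — 5 statements merged into one kernel-verified Lean document; each statement's English description precedes it below -/
import Mathlib

section
/- Let q be a positive real number, let Q(z) = Σ_{i=0}^n b_i z^i be a real polynomial of degree n (so b_n ≠ 0), and define P(z) = Σ_{i=0}^n b_i z^{n−i}(z² + q)^i, so that P(z) = z^n Q(z + q/z). Then all complex roots of P lie on the circle |z| = √q if and only if all complex roots of Q are real and lie in the interval [−2√q, 2√q]. -/
/-!
For `w ≠ 0` we have `P(w) = wⁿ Q(w + q/w)`, while `P(0) = bₙ qⁿ ≠ 0`; and over `ℂ` every `z` is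
of the form `w + q/w`. So everything reduces to: for `w ≠ 0`, `w + q/w` is real and lies in
`[-2√q, 2√q]` iff `|w| = √q`. If `|w| = √q` then `q/w = w̄`, so `w + q/w = 2 Re w`. Conversely,
if `w + q/w = x` is real then `w² - x w + q = 0`; either `w` is not real, and comparing imaginary
parts gives `x = 2 Re w` and then `|w|² = q`, or `w` is real and `x² ≤ 4q` forces a double root
`w = x/2` with `w² = q`.
-/

open Polynomial Finset

section Substitution

variable {R K : Type*} [CommRing R] [Field K] [Algebra R K]

theorem aeval_sum_mul_pow_sub_mul_sq_add_pow (b : ℕ → R) (c : R) (n : ℕ) {w : K}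
    (hw : w ≠ 0) :
    aeval w (∑ i ∈ range (n + 1), C (b i) * X ^ (n - i) * (X ^ 2 + C c) ^ i) =
      w ^ n * aeval (w + algebraMap R K c / w) (∑ i ∈ range (n + 1), C (b i) * X ^ i) := by
  simp only [map_sum, map_mul, map_pow, map_add, aeval_C, aeval_X, mul_sum]
  refine sum_congr rfl fun i hi => ?_
  have hin : i ≤ n := Nat.lt_succ_iff.mp (mem_range.mp hi)
  calc algebraMap R K (b i) * w ^ (n - i) * (w ^ 2 + algebraMap R K c) ^ i
      = algebraMap R K (b i) * w ^ (n - i) * (w * (w + algebraMap R K c / w)) ^ i := by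
        rw [mul_add, mul_div_cancel₀ _ hw, sq]
    _ = w ^ (n - i + i) * (algebraMap R K (b i) * (w + algebraMap R K c / w) ^ i) := by
        rw [mul_pow]; ring
    _ = _ := by rw [Nat.sub_add_cancel hin]

theorem aeval_zero_sum_mul_pow_sub_mul_sq_add_pow (b : ℕ → R) (c : R) (n : ℕ) :
    aeval (0 : K) (∑ i ∈ range (n + 1), C (b i) * X ^ (n - i) * (X ^ 2 + C c) ^ i) =
      algebraMap R K (b n * c ^ n) := by
  rw [map_sum, sum_eq_single_of_mem n (self_mem_range_succ n)]
  · simp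
  · intro i hi hin
    have : n - i ≠ 0 := by have := mem_range.mp hi; omega
    simp [zero_pow this]

end Substitution

theorem IsAlgClosed.exists_ne_zero_add_div_eq {K : Type*} [Field K] [IsAlgClosed K] {c : K}
    (hc : c ≠ 0) (z : K) : ∃ w ≠ 0, w + c / w = z := by
  have hdeg : (X ^ 2 - C z * X + C c).natDegree = 2 := by compute_degree!
  obtain ⟨w, hw⟩ := exists_root _ (degree_ne_of_natDegree_ne (hdeg ▸ two_ne_zero))
  have hquad : w ^ 2 - z * w + c = 0 := by simpa using hw
  have hw0 : w ≠ 0 := by rintro rfl; simp [hc] at hquad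
  refine ⟨w, hw0, ?_⟩
  field_simp
  linear_combination hquad

namespace Complex

theorem add_div_eq_two_re_of_norm_eq_sqrt {q : ℝ} {w : ℂ} (hq : 0 ≤ q) (hw0 : w ≠ 0)
    (hw : ‖w‖ = √q) : w + q / w = (2 * w.re : ℝ) := by
  have hns : normSq w = q := by rw [normSq_eq_norm_sq, hw, Real.sq_sqrt hq]
  rw [← add_conj, div_eq_iff hw0 |>.mpr (by rw [mul_comm, mul_conj, hns])]

theorem norm_eq_sqrt_of_add_div_eq {q x : ℝ} {w : ℂ} (hw0 : w ≠ 0) (hwx : w + q / w = x)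
    (hx : x ^ 2 ≤ 4 * q) : ‖w‖ = √q := by
  have hquad : w ^ 2 + q = x * w := by
    field_simp at hwx
    linear_combination hwx
  have hre : w.re ^ 2 - w.im ^ 2 + q = x * w.re := by
    have h := congrArg re hquad
    simp only [sq, mul_re, add_re, ofReal_re, ofReal_im, zero_mul, sub_zero] at h
    linarith
  have him : 2 * w.re * w.im = x * w.im := by
    have h := congrArg im hquad
    simp only [sq, mul_im, add_im, ofReal_im, ofReal_re, zero_mul, add_zero] at h
    linarith
  suffices w.re ^ 2 + w.im ^ 2 = q by rw [norm_def, normSq_apply, ← sq, ← sq, this]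
  by_cases him0 : w.im = 0
  · rw [him0] at hre ⊢
    have hx : x = 2 * w.re := by nlinarith [sq_nonneg (2 * w.re - x)]
    subst hx
    linarith
  · have hx : x = 2 * w.re := by linarith [mul_right_cancel₀ him0 him]
    subst hx
    linarith

theorem exists_real_add_div_eq_iff {q : ℝ} (hq : 0 ≤ q) {w : ℂ} (hw0 : w ≠ 0) :
    (∃ x : ℝ, w + q / w = x ∧ -(2 * √q) ≤ x ∧ x ≤ 2 * √q) ↔ ‖w‖ = √q := by
  constructor
  · rintro ⟨x, hwx, hlo, hhi⟩
    refine norm_eq_sqrt_of_add_div_eq hw0 hwx ?_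
    have : x ^ 2 ≤ (2 * √q) ^ 2 := sq_le_sq' hlo hhi
    rwa [mul_pow, Real.sq_sqrt hq, show (2 : ℝ) ^ 2 = 4 by norm_num] at this
  · intro hw
    have hre := abs_le.mp (hw ▸ abs_re_le_norm w)
    exact ⟨2 * w.re, add_div_eq_two_re_of_norm_eq_sqrt hq hw0 hw, by linarith, by linarith⟩

end Complex

theorem roots_on_circle_iff_roots_real_in_interval (q : ℝ) (hq : 0 < q) (n : ℕ)
    (b : ℕ → ℝ) (hbn : b n ≠ 0)
    (Q P : Polynomial ℝ)
    (hQ : Q = ∑ i ∈ Finset.range (n + 1), C (b i) * X ^ i)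
    (hP : P = ∑ i ∈ Finset.range (n + 1), C (b i) * X ^ (n - i) * (X ^ 2 + C q) ^ i) :
    (∀ z : ℂ, (P.map (algebraMap ℝ ℂ)).eval z = 0 → ‖z‖ = Real.sqrt q) ↔
      (∀ z : ℂ, (Q.map (algebraMap ℝ ℂ)).eval z = 0 →
        ∃ x : ℝ, z = (x : ℂ) ∧ -(2 * Real.sqrt q) ≤ x ∧ x ≤ 2 * Real.sqrt q) := by
  subst hQ hP
  simp only [eval_map_algebraMap]
  have hq0 : (q : ℂ) ≠ 0 := by exact_mod_cast hq.ne'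
  have hsubst (w : ℂ) (hw0 : w ≠ 0) := aeval_sum_mul_pow_sub_mul_sq_add_pow b q n hw0
  simp only [Complex.coe_algebraMap] at hsubst
  constructor
  · intro h z hz
    obtain ⟨w, hw0, rfl⟩ := IsAlgClosed.exists_ne_zero_add_div_eq hq0 z
    refine (Complex.exists_real_add_div_eq_iff hq.le hw0).2 (h w ?_)
    rw [hsubst w hw0, hz, mul_zero]
  · intro h w hw
    have hw0 : w ≠ 0 := by
      rintro rfl
      rw [aeval_zero_sum_mul_pow_sub_mul_sq_add_pow] at hw
      exact mul_ne_zero hbn (pow_ne_zero n hq.ne') ((map_eq_zero _).mp hw)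
    rw [hsubst w hw0, mul_eq_zero] at hw
    exact (Complex.exists_real_add_div_eq_iff hq.le hw0).1
      (h _ (hw.resolve_left (pow_ne_zero n hw0)))
end

section
/- Let R(z) = Σ_{i=0}^n c_i z^i be a complex polynomial of degree n (c_n ≠ 0), with power sums s_j = Σ_k r_k^j where r_1, …, r_n are the complex roots of R counted with multiplicity. Fix j with 1 ≤ j ≤ n−1, and let c'_0, …, c'_{n−j} be complex numbers. Then the j-th power sum of the polynomial R(z) + Σ_{i=0}^{n−j} c'_i z^i (which still has degree n and leading coefficient c_n) equals s_j − j·c'_{n−j}/c_n. -/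
/-!
Newton's identities express the power sum `s_j` of a multiset as
`(-1)^(j+1) j e_j` plus a polynomial in `e_1, …, e_{j-1}` and `s_1, …, s_{j-1}`, and by Vieta's
formulas `e_i` of the roots of a degree-`n` polynomial is `(-1)^i c_{n-i} / c_n`. Adding a
polynomial of degree at most `n - j` leaves `c_n, …, c_{n-j+1}`, hence `e_1, …, e_{j-1}` and
`s_1, …, s_{j-1}`, unchanged, and moves `e_j` by `(-1)^j c'_{n-j} / c_n`.
-/

open Polynomial Finset

section Newton

variable {S : Type*} [CommRing S]

theorem Multiset.sum_map_pow_eq_mul_esymm_sub_sum (s : Multiset S) {k : ℕ} (hk : 0 < k) :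
    (s.map (· ^ k)).sum = (-1) ^ (k + 1) * k * s.esymm k -
      ∑ a ∈ HasAntidiagonal.antidiagonal k with a.1 ∈ Set.Ioo 0 k,
        (-1) ^ a.1 * s.esymm a.1 * (s.map (· ^ a.2)).sum := by
  classical
  have h := congrArg (MvPolynomial.aeval fun x : s ↦ (x : S))
    (MvPolynomial.psum_eq_mul_esymm_sub_sum s S k hk)
  have hpsum : ∀ m, MvPolynomial.aeval (fun x : s ↦ (x : S)) (MvPolynomial.psum s S m) =
      (s.map (· ^ m)).sum := fun m ↦ by
    simp only [MvPolynomial.psum, map_sum, map_pow, MvPolynomial.aeval_X]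
    exact congrArg Multiset.sum (Multiset.map_univ s (· ^ m))
  simpa only [map_sub, map_mul, map_sum, map_pow, map_neg, map_one, map_natCast, hpsum,
    MvPolynomial.aeval_esymm_eq_multiset_esymm, Multiset.map_univ_coe] using h

variable {s t : Multiset S} {j : ℕ}

theorem Multiset.sum_map_pow_sub_sum_map_pow (hj : 0 < j)
    (hesymm : ∀ i < j, s.esymm i = t.esymm i)
    (hpow : ∀ m ∈ Set.Ioo 0 j, (s.map (· ^ m)).sum = (t.map (· ^ m)).sum) :
    (s.map (· ^ j)).sum - (t.map (· ^ j)).sum =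
      (-1) ^ (j + 1) * j * (s.esymm j - t.esymm j) := by
  have hsum : ∑ a ∈ HasAntidiagonal.antidiagonal j with a.1 ∈ Set.Ioo 0 j,
        (-1) ^ a.1 * s.esymm a.1 * (s.map (· ^ a.2)).sum =
      ∑ a ∈ HasAntidiagonal.antidiagonal j with a.1 ∈ Set.Ioo 0 j,
        (-1) ^ a.1 * t.esymm a.1 * (t.map (· ^ a.2)).sum := by
    refine Finset.sum_congr rfl fun a ha ↦ ?_
    rw [Finset.mem_filter, HasAntidiagonal.mem_antidiagonal, Set.mem_Ioo] at ha
    rw [hesymm a.1 (by omega), hpow a.2 ⟨by omega, by omega⟩]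
  rw [s.sum_map_pow_eq_mul_esymm_sub_sum hj, t.sum_map_pow_eq_mul_esymm_sub_sum hj, hsum]
  ring

theorem Multiset.sum_map_pow_eq_of_esymm_eq (hesymm : ∀ i < j, s.esymm i = t.esymm i) :
    ∀ m ∈ Set.Ioo 0 j, (s.map (· ^ m)).sum = (t.map (· ^ m)).sum := by
  intro m hm
  induction m using Nat.strong_induction_on with
  | _ m ih =>
    have h := Multiset.sum_map_pow_sub_sum_map_pow hm.1 (fun i hi ↦ hesymm i (hi.trans hm.2))
      fun k hk ↦ ih k hk.2 ⟨hk.1, hk.2.trans hm.2⟩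
    rw [hesymm m hm.2, sub_self, mul_zero] at h
    exact sub_eq_zero.mp h

theorem Multiset.sum_map_pow_sub_of_esymm_eq (hj : 0 < j)
    (hesymm : ∀ i < j, s.esymm i = t.esymm i) :
    (s.map (· ^ j)).sum - (t.map (· ^ j)).sum =
      (-1) ^ (j + 1) * j * (s.esymm j - t.esymm j) :=
  Multiset.sum_map_pow_sub_sum_map_pow hj hesymm (Multiset.sum_map_pow_eq_of_esymm_eq hesymm)

end Newton

namespace Polynomial

variable {F : Type*} [Field F]

theorem esymm_roots_of_splits {p : F[X]} (hsplit : p.Splits) (hp : p ≠ 0) {i : ℕ}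
    (hi : i ≤ p.natDegree) :
    p.roots.esymm i = (-1) ^ i * p.coeff (p.natDegree - i) / p.leadingCoeff := by
  have h := coeff_eq_esymm_roots_of_splits hsplit (Nat.sub_le p.natDegree i)
  rw [Nat.sub_sub_self hi] at h
  have hsign : ((-1 : F) ^ i) ^ 2 = 1 := by rw [← pow_mul, pow_mul', neg_one_sq, one_pow]
  rw [h, eq_div_iff (leadingCoeff_ne_zero.mpr hp)]
  linear_combination (-(p.leadingCoeff * p.roots.esymm i)) * hsign

theorem sum_map_pow_roots_add {p q : F[X]} (hp : p.Splits) (hpq : (p + q).Splits) {j : ℕ}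
    (hj : 0 < j) (hq : q.natDegree + j ≤ p.natDegree) :
    ((p + q).roots.map (· ^ j)).sum =
      (p.roots.map (· ^ j)).sum - j * q.coeff (p.natDegree - j) / p.leadingCoeff := by
  have hqp : q.natDegree < p.natDegree := by omega
  have hdeg : (p + q).natDegree = p.natDegree := natDegree_add_eq_left_of_natDegree_lt hqp
  have hlead : (p + q).leadingCoeff = p.leadingCoeff :=
    leadingCoeff_add_of_degree_lt' (degree_lt_degree hqp)
  have hp0 : p ≠ 0 := ne_zero_of_natDegree_gt hqp
  have hpq0 : p + q ≠ 0 := by rwa [← leadingCoeff_ne_zero, hlead, leadingCoeff_ne_zero]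
  have hesymm : ∀ i ≤ j, (p + q).roots.esymm i =
      p.roots.esymm i + (-1) ^ i * q.coeff (p.natDegree - i) / p.leadingCoeff := by
    intro i hi
    rw [esymm_roots_of_splits hpq hpq0 (by omega), esymm_roots_of_splits hp hp0 (by omega),
      hdeg, hlead, coeff_add]
    ring
  have hlow : ∀ i < j, (p + q).roots.esymm i = p.roots.esymm i := fun i hi ↦ by
    rw [hesymm i hi.le, coeff_eq_zero_of_natDegree_lt (by omega), mul_zero, zero_div, add_zero]
  have h := Multiset.sum_map_pow_sub_of_esymm_eq hj hlow
  rw [hesymm j le_rfl] at h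
  have hsign : (-1 : F) ^ (j + 1) * (-1) ^ j = -1 := by
    rw [← pow_add, Odd.neg_one_pow ⟨j, by ring⟩]
  linear_combination h + (j * q.coeff (p.natDegree - j) / p.leadingCoeff) * hsign

variable {R : Type*} [Semiring R]

theorem coeff_sum_range_C_mul_X_pow (c : ℕ → R) (m k : ℕ) :
    (∑ i ∈ range (m + 1), C (c i) * X ^ i).coeff k = if k ≤ m then c k else 0 := by
  simp [finsetSum_coeff]

theorem natDegree_sum_range_C_mul_X_pow_le (c : ℕ → R) (m : ℕ) :
    (∑ i ∈ range (m + 1), C (c i) * X ^ i).natDegree ≤ m :=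
  natDegree_sum_le_of_forall_le _ _ fun _ hi ↦
    (natDegree_C_mul_X_pow_le _ _).trans (Nat.lt_succ_iff.mp (mem_range.mp hi))

theorem natDegree_sum_range_C_mul_X_pow {c : ℕ → R} {m : ℕ} (hc : c m ≠ 0) :
    (∑ i ∈ range (m + 1), C (c i) * X ^ i).natDegree = m :=
  natDegree_eq_of_le_of_coeff_ne_zero (natDegree_sum_range_C_mul_X_pow_le c m)
    (by rwa [coeff_sum_range_C_mul_X_pow, if_pos le_rfl])

theorem leadingCoeff_sum_range_C_mul_X_pow {c : ℕ → R} {m : ℕ} (hc : c m ≠ 0) :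
    (∑ i ∈ range (m + 1), C (c i) * X ^ i).leadingCoeff = c m := by
  rw [leadingCoeff, natDegree_sum_range_C_mul_X_pow hc, coeff_sum_range_C_mul_X_pow,
    if_pos le_rfl]

end Polynomial

theorem power_sum_of_perturbed_polynomial (n : ℕ) (c : ℕ → ℂ) (hcn : c n ≠ 0)
    (R : Polynomial ℂ) (hR : R = ∑ i ∈ Finset.range (n + 1), C (c i) * X ^ i)
    (j : ℕ) (hj1 : 1 ≤ j) (hjn : j ≤ n - 1)
    (c' : ℕ → ℂ) :
    ((R + ∑ i ∈ Finset.range (n - j + 1), C (c' i) * X ^ i).roots.map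
        (fun r : ℂ => r ^ j)).sum
      = (R.roots.map (fun r : ℂ => r ^ j)).sum - (j : ℂ) * c' (n - j) / c n := by
  have hdeg : R.natDegree = n := hR ▸ natDegree_sum_range_C_mul_X_pow hcn
  have hlead : R.leadingCoeff = c n := hR ▸ leadingCoeff_sum_range_C_mul_X_pow hcn
  have hq :
      (∑ i ∈ Finset.range (n - j + 1), C (c' i) * X ^ i).natDegree + j ≤ R.natDegree := by
    have := natDegree_sum_range_C_mul_X_pow_le c' (n - j)
    omega
  rw [sum_map_pow_roots_add (IsAlgClosed.splits _) (IsAlgClosed.splits _) hj1 hq, hdeg, hlead,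
    coeff_sum_range_C_mul_X_pow, if_pos le_rfl]
end

section
/- Let q be a positive real number, let r_1, …, r_n be real numbers in [−2√q, 2√q] with power sums s_j = Σ_k r_k^j, and set s''_i = Σ_{k=0}^i C(i,k)·(2√q)^{i−k}·(−1)^k·s_k (so s''_i = Σ_k (2√q − r_k)^i). Then s''_i · s''_{i−2} − (s''_{i−1})² ≥ 0 for all i ≥ 2, and s''_i − 4√q·s''_{i−1} ≤ 0 for all i ≥ 1. -/
/-!
By the binomial theorem `s''_i = ∑ₖ xₖ ^ i` with `xₖ = 2√q - rₖ ∈ [0, 4√q]`. Since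
`(xₖ ^ (i - 1)) ^ 2 = xₖ ^ i * xₖ ^ (i - 2)` with both factors nonnegative, Cauchy–Schwarz gives the
first inequality; `xₖ ≤ 4√q` termwise gives the second.
-/

open Finset

section PowerSums

variable {R ι : Type*}

theorem sum_choose_mul_pow_mul_neg_one_pow_mul_sum_pow [CommRing R] (s : Finset ι) (c : R)
    (r : ι → R) (i : ℕ) :
    ∑ k ∈ range (i + 1), (i.choose k : R) * c ^ (i - k) * (-1) ^ k * ∑ l ∈ s, r l ^ k =
      ∑ l ∈ s, (c - r l) ^ i := by
  simp_rw [mul_sum]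
  rw [sum_comm]
  refine sum_congr rfl fun l _ => ?_
  rw [sub_eq_neg_add, add_pow]
  refine sum_congr rfl fun k _ => ?_
  rw [neg_pow]
  ring

theorem sq_sum_pow_succ_le_sum_pow_add_two_mul_sum_pow [CommSemiring R] [LinearOrder R]
    [IsStrictOrderedRing R] [ExistsAddOfLE R] (s : Finset ι) {x : ι → R}
    (hx : ∀ l ∈ s, 0 ≤ x l) (j : ℕ) :
    (∑ l ∈ s, x l ^ (j + 1)) ^ 2 ≤ (∑ l ∈ s, x l ^ (j + 2)) * ∑ l ∈ s, x l ^ j :=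
  sum_sq_le_sum_mul_sum_of_sq_le_mul s (fun l hl => pow_nonneg (hx l hl) _)
    (fun l hl => pow_nonneg (hx l hl) _) fun l _ => le_of_eq (by ring)

theorem sum_pow_succ_le_mul_sum_pow [CommSemiring R] [PartialOrder R] [IsOrderedRing R]
    (s : Finset ι) {x : ι → R} {M : R} (hx₀ : ∀ l ∈ s, 0 ≤ x l) (hxM : ∀ l ∈ s, x l ≤ M)
    (j : ℕ) : ∑ l ∈ s, x l ^ (j + 1) ≤ M * ∑ l ∈ s, x l ^ j := by
  rw [mul_sum]
  refine sum_le_sum fun l hl => ?_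
  rw [pow_succ']
  exact mul_le_mul_of_nonneg_right (hxM l hl) (pow_nonneg (hx₀ l hl) j)

end PowerSums

theorem reflected_power_sum_inequalities_general (q : ℝ) (n : ℕ) (r : Fin n → ℝ)
    (hr : ∀ k, r k ∈ Set.Icc (-(2 * Real.sqrt q)) (2 * Real.sqrt q))
    (s'' : ℕ → ℝ)
    (hs'' : ∀ i, s'' i = ∑ k ∈ Finset.range (i + 1),
        (Nat.choose i k : ℝ) * (2 * Real.sqrt q) ^ (i - k) * (-1) ^ k * (∑ l, r l ^ k)) :
    (∀ i, 2 ≤ i → s'' i * s'' (i - 2) - (s'' (i - 1)) ^ 2 ≥ 0) ∧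
      (∀ i, 1 ≤ i → s'' i - 4 * Real.sqrt q * s'' (i - 1) ≤ 0) := by
  have hs : ∀ i, s'' i = ∑ l, (2 * √q - r l) ^ i := fun i => by
    rw [hs'', sum_choose_mul_pow_mul_neg_one_pow_mul_sum_pow]
  have hx₀ : ∀ l ∈ univ, 0 ≤ 2 * √q - r l := fun l _ => sub_nonneg.2 (hr l).2
  have hxM : ∀ l ∈ univ, 2 * √q - r l ≤ 4 * √q := fun l _ => by linarith [(hr l).1]
  refine ⟨fun i hi => ?_, fun i hi => ?_⟩
  · obtain ⟨j, rfl⟩ := Nat.exists_eq_add_of_le' hi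
    simp only [hs, Nat.add_sub_cancel, show j + 2 - 1 = j + 1 by omega]
    linarith [sq_sum_pow_succ_le_sum_pow_add_two_mul_sum_pow univ hx₀ j]
  · obtain ⟨j, rfl⟩ := Nat.exists_eq_add_of_le' hi
    simp only [hs, Nat.add_sub_cancel]
    linarith [sum_pow_succ_le_mul_sum_pow univ hx₀ hxM j]

theorem reflected_power_sum_inequalities (q : ℝ) (hq : 0 < q) (n : ℕ) (r : Fin n → ℝ)
    (hr : ∀ k, r k ∈ Set.Icc (-(2 * Real.sqrt q)) (2 * Real.sqrt q))
    (s'' : ℕ → ℝ)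
    (hs'' : ∀ i, s'' i = ∑ k ∈ Finset.range (i + 1),
        (Nat.choose i k : ℝ) * (2 * Real.sqrt q) ^ (i - k) * (-1) ^ k * (∑ l, r l ^ k)) :
    (∀ i, 2 ≤ i → s'' i * s'' (i - 2) - (s'' (i - 1)) ^ 2 ≥ 0) ∧
      (∀ i, 1 ≤ i → s'' i - 4 * Real.sqrt q * s'' (i - 1) ≤ 0) :=
  reflected_power_sum_inequalities_general q n r hr s'' hs''
end

section
/- Let q be a positive real number, let R be a real polynomial of degree at least 2, and let c be a real number such that R(z) + c has all roots real and lying in [−2√q, 2√q]. Let T = gcd(R'(z), (z² − 4q)·R''(z)), and suppose T is nonconstant. Then every complex root r of T is real, lies in [−2√q, 2√q], and satisfies R(r) + c = 0. (In particular: if r = ±2√q then R(±2√q) + c = 0, and if −2√q < r < 2√q then r is a multiple root of R' and a root of R + c.) -/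
/-!
Write `P = R + c`. A root `z` of `T` is a critical point of `P`, so by Gauss–Lucas it lies in the
convex hull of the roots of `P`, i.e. in `[-2√q, 2√q]`. If `P z ≠ 0`, the logarithmic derivative
`P'/P = ∑ 1/(z - r)` vanishes at `z`. For `z = ±2√q` all its terms have the same strict sign, which
is impossible; otherwise `P'' z = 0` as well, and `P''/P = (P'/P)² - ∑ 1/(z - r)²` forces
`∑ 1/(z - r)² = 0`, again impossible.
-/

open Polynomial

namespace Polynomial

section Field

variable {K : Type*} [Field K]

theorem eval_derivative_derivative_multiset_prod_X_sub_C {s : Multiset K} {x : K} (hx : x ∉ s) :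
    (s.map (X - C ·)).prod.derivative.derivative.eval x =
      (s.map (X - C ·)).prod.eval x *
        ((s.map fun z ↦ 1 / (x - z)).sum ^ 2 - (s.map fun z ↦ 1 / (x - z) ^ 2).sum) := by
  induction s using Multiset.induction with
  | empty => simp
  | cons a t ih =>
    have hxa : x - a ≠ 0 := sub_ne_zero.mpr fun h ↦ hx (h ▸ Multiset.mem_cons_self x t)
    have hxt : x ∉ t := fun h ↦ hx (Multiset.mem_cons_of_mem h)
    set p := (t.map (X - C ·)).prod
    have hp : p.eval x ≠ 0 := by
      simpa [p, eval_multiset_prod, sub_eq_zero] using hxt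
    have hsplit : p.Splits := Splits.multisetProd fun q hq ↦ by
      obtain ⟨b, -, rfl⟩ := Multiset.mem_map.mp hq
      exact Splits.X_sub_C b
    have hp' : p.derivative.eval x = p.eval x * (t.map fun z ↦ 1 / (x - z)).sum := by
      simpa [p] using hsplit.eval_derivative_eq_eval_mul_sum hp
    have hd : ((X - C a) * p).derivative.derivative =
        2 * p.derivative + (X - C a) * p.derivative.derivative := by
      simp only [derivative_mul, derivative_add, derivative_sub, derivative_X, derivative_C,
        derivative_one, derivative_zero]
      ring
    rw [Multiset.map_cons, Multiset.prod_cons, hd]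
    simp only [Multiset.map_cons, Multiset.sum_cons, eval_add, eval_mul, eval_sub, eval_X,
      eval_C, eval_ofNat, hp', ih hxt]
    field_simp
    ring

variable {f : K[X]} {x : K}

theorem Splits.eval_derivative_derivative_eq_eval_mul_sum (hf : f.Splits) (hx : f.eval x ≠ 0) :
    f.derivative.derivative.eval x = f.eval x *
      ((f.roots.map fun z ↦ 1 / (x - z)).sum ^ 2 - (f.roots.map fun z ↦ 1 / (x - z) ^ 2).sum) := by
  have key := eval_derivative_derivative_multiset_prod_X_sub_C fun h ↦ hx (isRoot_of_mem_roots h)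
  conv_lhs => rw [hf.eq_prod_roots]
  rw [derivative_C_mul, derivative_C_mul, eval_C_mul, key, ← mul_assoc, ← eval_C_mul,
    ← hf.eq_prod_roots]

theorem Splits.sum_one_div_sub_roots_eq_zero (hf : f.Splits) (hx : ¬f.IsRoot x)
    (h' : f.derivative.IsRoot x) : (f.roots.map fun z ↦ 1 / (x - z)).sum = 0 := by
  have h := hf.eval_derivative_eq_eval_mul_sum hx
  rw [h'.eq_zero, eq_comm, mul_eq_zero] at h
  exact h.resolve_left hx

end Field

section LinearOrderedField

variable {K : Type*} [Field K] [LinearOrder K] [IsStrictOrderedRing K] {f : K[X]} {x : K}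

theorem Splits.isRoot_of_isRoot_derivative_of_forall_roots_le (hf : f.Splits)
    (hdeg : 0 < f.natDegree) (hle : ∀ r ∈ f.roots, r ≤ x) (h' : f.derivative.IsRoot x) :
    f.IsRoot x := by
  by_contra hx
  have hpos : ∀ r ∈ f.roots, (0 : K) < 1 / (x - r) := fun r hr ↦
    one_div_pos.mpr <| sub_pos.mpr <| (hle r hr).lt_of_ne fun h ↦ hx (h ▸ isRoot_of_mem_roots hr)
  have := Multiset.sum_lt_sum_of_nonempty (hf.roots_ne_zero hdeg.ne') hpos
  rw [hf.sum_one_div_sub_roots_eq_zero hx h', Multiset.map_const', Multiset.sum_replicate,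
    smul_zero] at this
  exact this.false

theorem Splits.isRoot_of_isRoot_derivative_of_forall_le_roots (hf : f.Splits)
    (hdeg : 0 < f.natDegree) (hle : ∀ r ∈ f.roots, x ≤ r) (h' : f.derivative.IsRoot x) :
    f.IsRoot x := by
  by_contra hx
  have hneg : ∀ r ∈ f.roots, 1 / (x - r) < (0 : K) := fun r hr ↦
    one_div_neg.mpr <| sub_neg.mpr <| (hle r hr).lt_of_ne fun h ↦ hx (h ▸ isRoot_of_mem_roots hr)
  have := Multiset.sum_lt_sum_of_nonempty (hf.roots_ne_zero hdeg.ne') hneg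
  rw [hf.sum_one_div_sub_roots_eq_zero hx h', Multiset.map_const', Multiset.sum_replicate,
    smul_zero] at this
  exact this.false

theorem Splits.isRoot_of_isRoot_derivative_of_isRoot_derivative_derivative (hf : f.Splits)
    (hdeg : 0 < f.natDegree) (h' : f.derivative.IsRoot x) (h'' : f.derivative.derivative.IsRoot x) :
    f.IsRoot x := by
  by_contra hx
  have hsq : (f.roots.map fun z ↦ 1 / (x - z) ^ 2).sum = 0 := by
    have h := hf.eval_derivative_derivative_eq_eval_mul_sum hx
    rw [h''.eq_zero, hf.sum_one_div_sub_roots_eq_zero hx h', zero_pow two_ne_zero, zero_sub,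
      mul_neg, zero_eq_neg, mul_eq_zero] at h
    exact h.resolve_left hx
  have hpos : ∀ r ∈ f.roots, (0 : K) < 1 / (x - r) ^ 2 := fun r hr ↦
    one_div_pos.mpr <| sq_pos_of_ne_zero <| sub_ne_zero.mpr fun h ↦ hx (h ▸ isRoot_of_mem_roots hr)
  have := Multiset.sum_lt_sum_of_nonempty (hf.roots_ne_zero hdeg.ne') hpos
  rw [hsq, Multiset.map_const', Multiset.sum_replicate, smul_zero] at this
  exact this.false

theorem Splits.isRoot_of_isRoot_derivative_of_forall_abs_roots_le (hf : f.Splits)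
    (hdeg : 0 < f.natDegree) (hle : ∀ r ∈ f.roots, |r| ≤ |x|) (h' : f.derivative.IsRoot x) :
    f.IsRoot x := by
  rcases le_total 0 x with hx | hx
  · refine hf.isRoot_of_isRoot_derivative_of_forall_roots_le hdeg (fun r hr ↦ ?_) h'
    exact (le_abs_self r).trans ((hle r hr).trans_eq (abs_of_nonneg hx))
  · refine hf.isRoot_of_isRoot_derivative_of_forall_le_roots hdeg (fun r hr ↦ ?_) h'
    exact neg_le_neg_iff.mp ((neg_le_abs r).trans ((hle r hr).trans_eq (abs_of_nonpos hx)))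

end LinearOrderedField

theorem aeval_complex_ofReal (p : ℝ[X]) (x : ℝ) : aeval (x : ℂ) p = p.eval x :=
  aeval_ofReal p x

def AllRootsIn (p : ℝ[X]) (S : Set ℝ) : Prop :=
  ∀ z : ℂ, (p.map (algebraMap ℝ ℂ)).eval z = 0 → z ∈ ((↑) : ℝ → ℂ) '' S

namespace AllRootsIn

variable {p g : ℝ[X]} {S : Set ℝ}

theorem splits (h : AllRootsIn p S) : p.Splits := by
  refine Splits.of_splits_map_of_injective (algebraMap ℝ ℂ).injective (IsAlgClosed.splits _)
    fun w hw ↦ ?_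
  obtain ⟨x, -, rfl⟩ := h w (isRoot_of_mem_roots hw)
  exact ⟨x, rfl⟩

theorem mem_of_mem_roots (h : AllRootsIn p S) {r : ℝ} (hr : r ∈ p.roots) : r ∈ S := by
  obtain ⟨x, hx, hxr⟩ := h r (by simpa [aeval_complex_ofReal] using isRoot_of_mem_roots hr)
  rwa [← Complex.ofReal_injective hxr]

theorem of_dvd (h : AllRootsIn p S) (hgp : g ∣ p) : AllRootsIn g S := fun z hz ↦
  h z (eval_eq_zero_of_dvd_of_eval_eq_zero (Polynomial.map_dvd _ hgp) hz)

theorem derivative (h : AllRootsIn p S) (hS : Convex ℝ S) (hp : 0 < p.natDegree) :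
    AllRootsIn p.derivative S := by
  intro z hz
  rw [← derivative_map] at hz
  set f := p.map (algebraMap ℝ ℂ)
  have hf : 0 < f.natDegree := by simpa [f] using hp
  have hf' : f.derivative ≠ 0 := mt derivative_eq_zero.mp hf.ne'
  refine (rootSet_derivative_subset_convexHull_rootSet (natDegree_pos_iff_degree_pos.mp hf)).trans
    (convexHull_min (fun w hw ↦ h w ?_) ?_) ?_
  · rw [mem_rootSet, coe_aeval_eq_eval] at hw
    exact hw.2
  · simpa using hS.linear_image Complex.ofRealCLM.toLinearMap
  · rw [mem_rootSet, coe_aeval_eq_eval]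
    exact ⟨hf', hz⟩

end AllRootsIn

end Polynomial

theorem gcd_roots_are_roots_general (q : ℝ)
    (R : Polynomial ℝ) (hdeg : 2 ≤ R.natDegree) (c : ℝ)
    (hroots : ∀ z : ℂ, ((R + C c).map (algebraMap ℝ ℂ)).eval z = 0 →
      ∃ x : ℝ, z = (x : ℂ) ∧ -(2 * Real.sqrt q) ≤ x ∧ x ≤ 2 * Real.sqrt q)
    (T : Polynomial ℝ)
    (hT : T = EuclideanDomain.gcd R.derivative
      ((X ^ 2 - C (4 * q)) * R.derivative.derivative)) :
    ∀ z : ℂ, (T.map (algebraMap ℝ ℂ)).eval z = 0 →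
      ∃ x : ℝ, z = (x : ℂ) ∧ -(2 * Real.sqrt q) ≤ x ∧ x ≤ 2 * Real.sqrt q ∧
        R.eval x + c = 0 := by
  intro z hz
  set P := R + C c
  have hP : AllRootsIn P (Set.Icc (-(2 * √q)) (2 * √q)) := fun w hw ↦ by
    obtain ⟨x, rfl, hx⟩ := hroots w hw
    exact ⟨x, hx, rfl⟩
  have hPdeg : 0 < P.natDegree := by rw [natDegree_add_C]; omega
  have hT1 : T ∣ P.derivative := by simpa [P, hT] using EuclideanDomain.gcd_dvd_left _ _
  have hT2 : T ∣ (X ^ 2 - C (4 * q)) * P.derivative.derivative := by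
    simpa [P, hT] using EuclideanDomain.gcd_dvd_right _ _
  obtain ⟨x, hxS, rfl⟩ := (hP.derivative (convex_Icc _ _) hPdeg).of_dvd hT1 z hz
  have hTx : T.IsRoot x := by simpa [aeval_complex_ofReal] using hz
  refine ⟨x, rfl, hxS.1, hxS.2, ?_⟩
  suffices P.IsRoot x by simpa [P] using this
  have hx1 : P.derivative.IsRoot x := eval_eq_zero_of_dvd_of_eval_eq_zero hT1 hTx
  have hx2 : (x ^ 2 - 4 * q) * P.derivative.derivative.eval x = 0 := by
    simpa using eval_eq_zero_of_dvd_of_eval_eq_zero hT2 hTx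
  rcases mul_eq_zero.mp hx2 with hxq | hx3
  · have habs : |x| = 2 * √q := by
      rw [← Real.sqrt_sq_eq_abs, sub_eq_zero.mp hxq, Real.sqrt_mul zero_le_four]
      norm_num
    refine hP.splits.isRoot_of_isRoot_derivative_of_forall_abs_roots_le hPdeg (fun r hr ↦ ?_) hx1
    exact habs ▸ abs_le.mpr (hP.mem_of_mem_roots hr)
  · exact hP.splits.isRoot_of_isRoot_derivative_of_isRoot_derivative_derivative hPdeg hx1 hx3

theorem gcd_roots_are_roots (q : ℝ) (hq : 0 < q)
    (R : Polynomial ℝ) (hdeg : 2 ≤ R.natDegree) (c : ℝ)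
    (hroots : ∀ z : ℂ, ((R + C c).map (algebraMap ℝ ℂ)).eval z = 0 →
      ∃ x : ℝ, z = (x : ℂ) ∧ -(2 * Real.sqrt q) ≤ x ∧ x ≤ 2 * Real.sqrt q)
    (T : Polynomial ℝ)
    (hT : T = EuclideanDomain.gcd R.derivative
      ((X ^ 2 - C (4 * q)) * R.derivative.derivative))
    (hTnonconst : 0 < T.natDegree) :
    ∀ z : ℂ, (T.map (algebraMap ℝ ℂ)).eval z = 0 →
      ∃ x : ℝ, z = (x : ℂ) ∧ -(2 * Real.sqrt q) ≤ x ∧ x ≤ 2 * Real.sqrt q ∧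
        R.eval x + c = 0 :=
  gcd_roots_are_roots_general q R hdeg c hroots T hT
end

section
/- Let q be a positive real number and let R be a real polynomial of degree d ≥ 1 with positive leading coefficient such that R' has all roots real and lying in [−2√q, 2√q]. Let x_1 ≤ ⋯ ≤ x_{d−1} be the roots of R' counted with multiplicity, set x_0 = −2√q and x_d = 2√q, and put y_i = R(x_i) for i = 0, …, d. Then for a real number c, the polynomial R(z) + c has all roots real and lying in [−2√q, 2√q] if and only if y_{d−2i} + c ≥ 0 for all integers i with 0 ≤ i ≤ ⌊d/2⌋ and y_{d−1−2i} + c ≤ 0 for all integers i with 0 ≤ i ≤ ⌊(d−1)/2⌋. -/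
/-!
Put `S = R + c`, so that `S' = R'` vanishes exactly at `x₁ ≤ ⋯ ≤ x_{d-1}`; the conditions on
the `y_i + c` say that `(-1)^(d-k) S(x_k) ≥ 0` for `0 ≤ k ≤ d`.

If `S` splits with all roots in `[x₀, x_d]` and `x_k` is not a root, Rolle's theorem on
`(x_k, ∞)` and on `(-∞, x_k)` allows at most `d - k` roots of `S` above `x_k` and at most `k`
below it. As there are `d` roots in all, exactly `d - k` of them exceed `x_k`, which fixes the
sign of `S(x_k)`.

Conversely, descending induction on `k` finds `d - k` roots of `S` in `[x_k, x_d]`, counted with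
multiplicity: a strict sign change between consecutive `x_k` produces a root by the intermediate
value theorem, and a root of `S` at a critical point `x_k` has multiplicity one more than its
multiplicity as a root of `S'`. For `k = 0` this accounts for all `d` roots of `S`.
-/

open Polynomial Finset

theorem Multiset.card_filter_add_card_filter_le {α : Type*} (s : Multiset α)
    {p q r : α → Prop} [DecidablePred p] [DecidablePred q] [DecidablePred r]
    (hpq : ∀ a, p a → ¬q a) (hpr : ∀ a, p a → r a) (hqr : ∀ a, q a → r a) :
    card (s.filter p) + card (s.filter q) ≤ card (s.filter r) := by
  rw [← card_add, filter_add_filter,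
    filter_eq_nil (p := fun a => p a ∧ q a) |>.2 fun a _ h => hpq a h.1 h.2, add_zero]
  exact card_le_card (monotone_filter_right s fun a => Or.rec (hpr a) (hqr a))

theorem card_filter_Icc_add_one_right {P : ℕ → Prop} [DecidablePred P] {k : ℕ}
    (hP : P (k + 1)) : #{i ∈ Icc 1 (k + 1) | P i} = #{i ∈ Icc 1 k | P i} + 1 := by
  rw [← insert_Icc_right_eq_Icc_add_one (by omega), filter_insert, if_pos hP,
    card_insert_of_notMem (by simp)]

theorem mul_neg_of_neg_one_pow_mul_nonneg {a b : ℝ} {n : ℕ} (ha : 0 ≤ (-1) ^ (n + 1) * a)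
    (hb : 0 ≤ (-1) ^ n * b) (ha0 : a ≠ 0) (hb0 : b ≠ 0) : a * b < 0 := by
  have hsq : ((-1 : ℝ) ^ n) * (-1) ^ n = 1 := by rw [← mul_pow]; norm_num
  rw [pow_succ] at ha
  have h : 0 ≤ -(a * b) := by linear_combination mul_nonneg ha hb - (a * b) * hsq
  exact lt_of_le_of_ne (neg_nonneg.1 h) (mul_ne_zero ha0 hb0)

theorem Multiset.neg_one_pow_card_filter_lt_mul_prod_sub_pos (m : Multiset ℝ) {t : ℝ}
    (ht : t ∉ m) : 0 < (-1) ^ card (m.filter (t < ·)) * (m.map (t - ·)).prod := by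
  induction m using Multiset.induction_on with
  | empty => simp
  | cons a m ih =>
    have hat : a ≠ t := fun h => ht (h ▸ mem_cons_self a m)
    have ih := ih fun h => ht (mem_cons_of_mem h)
    rw [filter_cons, map_cons, prod_cons]
    split_ifs with hta
    · rw [card_add, card_singleton, pow_add, pow_one]
      nlinarith [sub_neg.2 hta]
    · rw [zero_add]
      nlinarith [sub_pos.2 (lt_of_le_of_ne (not_lt.1 hta) hat)]

theorem forall_le_neg_one_pow_sub_mul_nonneg_iff {f : ℕ → ℝ} {d : ℕ} (hd : 1 ≤ d) :
    (∀ k ≤ d, 0 ≤ (-1) ^ (d - k) * f k) ↔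
      (∀ i ≤ d / 2, 0 ≤ f (d - 2 * i)) ∧
        ∀ i ≤ (d - 1) / 2, f (d - 1 - 2 * i) ≤ 0 := by
  constructor
  · intro h
    refine ⟨fun i hi => ?_, fun i hi => ?_⟩
    · simpa [show d - (d - 2 * i) = 2 * i by omega, pow_mul] using h (d - 2 * i) (by omega)
    · simpa [show d - (d - 1 - 2 * i) = 2 * i + 1 by omega, pow_succ, pow_mul]
        using h (d - 1 - 2 * i) (by omega)
  · rintro ⟨heven, hodd⟩ k hk
    obtain ⟨i, hi⟩ | ⟨i, hi⟩ := Nat.even_or_odd (d - k)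
    · simpa [hi, ← two_mul, pow_mul, show d - 2 * i = k by omega] using heven i (by omega)
    · simpa [hi, pow_succ, pow_mul, show d - 1 - 2 * i = k by omega] using hodd i (by omega)

theorem monotoneOn_Iic_of_endpoints {α : Type*} [Preorder α] {x : ℕ → α} {d : ℕ}
    (hmono : ∀ i j : ℕ, 1 ≤ i → i ≤ j → j ≤ d - 1 → x i ≤ x j)
    (hbound : ∀ i, 1 ≤ i → i ≤ d - 1 → x 0 ≤ x i ∧ x i ≤ x d) (h0d : x 0 ≤ x d) :
    MonotoneOn x (Set.Iic d) := by
  intro i hi j hj hij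
  simp only [Set.mem_Iic] at hi hj
  obtain rfl | hi0 := Nat.eq_zero_or_pos i
  · obtain rfl | hj0 := Nat.eq_zero_or_pos j
    · exact le_rfl
    obtain rfl | hjd := eq_or_lt_of_le hj
    · exact h0d
    exact (hbound j hj0 (by omega)).1
  · obtain rfl | hjd := eq_or_lt_of_le hj
    · obtain rfl | hid := eq_or_lt_of_le hi
      · exact le_rfl
      exact (hbound i hi0 (by omega)).2
    exact hmono i j hi0 hij (by omega)

namespace Polynomial

theorem card_roots_filter_le_derivative (p : ℝ[X]) {s : Set ℝ} [DecidablePred (· ∈ s)]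
    (hs : s.OrdConnected) :
    Multiset.card (p.roots.filter (· ∈ s)) ≤
      Multiset.card (p.derivative.roots.filter (· ∈ s)) + 1 := by
  classical
  set F := (p.roots.filter (· ∈ s)).toFinset
  -- a root of `p` of multiplicity `m` is a root of `p'` of multiplicity `m - 1`
  have hmult : p.roots.filter (· ∈ s) ≤
      p.derivative.roots.filter (fun u => u ∈ s ∧ p.IsRoot u) + F.val := by
    refine Multiset.le_iff_count.2 fun u => ?_
    rw [Multiset.count_filter]
    split_ifs with hus
    · rcases (Multiset.count u p.roots).eq_zero_or_pos with h0 | hpos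
      · exact h0 ▸ Nat.zero_le _
      have hu : u ∈ p.roots := Multiset.count_pos.1 hpos
      have hroot := isRoot_of_mem_roots hu
      rw [Multiset.count_add, Multiset.count_filter_of_pos ⟨hus, hroot⟩,
        Multiset.count_eq_one_of_mem F.nodup (by simp [F, hu, hus]), count_roots, count_roots,
        derivative_rootMultiplicity_of_root hroot]
      omega
    · exact Nat.zero_le _
  -- Rolle: between consecutive roots of `p` in `s` lies a root of `p'` in `s` that is not
  -- a root of `p`
  have hinter : F.card ≤
      (p.derivative.roots.filter (fun u => u ∈ s ∧ ¬p.IsRoot u)).toFinset.card + 1 := by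
    refine Finset.card_le_of_interleaved fun u hu v hv huv hgap => ?_
    simp only [F, Multiset.mem_toFinset, Multiset.mem_filter] at hu hv hgap
    have hp : p ≠ 0 := ne_zero_of_mem_roots hu.1
    have hp' : p.derivative ≠ 0 := fun h => by
      have hu' := hu.1
      rw [eq_C_of_derivative_eq_zero h, roots_C] at hu'
      exact Multiset.notMem_zero _ hu'
    obtain ⟨w, hw, hw'⟩ := exists_deriv_eq_zero huv p.continuousOn
      ((isRoot_of_mem_roots hu.1).trans (isRoot_of_mem_roots hv.1).symm)
    have hws : w ∈ s := hs.out hu.2 hv.2 (Set.Ioo_subset_Icc_self hw)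
    refine ⟨w, ?_, hw⟩
    rw [Multiset.mem_toFinset, Multiset.mem_filter, mem_roots hp', IsRoot, ← p.deriv]
    exact ⟨hw', hws, fun hroot => hgap w ⟨(mem_roots hp).2 hroot, hws⟩ hw⟩
  calc Multiset.card (p.roots.filter (· ∈ s))
      ≤ Multiset.card (p.derivative.roots.filter (fun u => u ∈ s ∧ p.IsRoot u)) + F.card := by
        simpa using Multiset.card_le_card hmult
    _ ≤ Multiset.card (p.derivative.roots.filter (fun u => u ∈ s ∧ p.IsRoot u)) +
          Multiset.card (p.derivative.roots.filter (fun u => u ∈ s ∧ ¬p.IsRoot u)) + 1 := by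
        grw [hinter, Multiset.toFinset_card_le, add_assoc]
    _ = Multiset.card (p.derivative.roots.filter (· ∈ s)) + 1 := by
        rw [← Multiset.card_add, ← Multiset.filter_filter, ← Multiset.filter_filter,
          ← Multiset.filter_add, Multiset.filter_add_not]

theorem neg_one_pow_mul_eval_pos_of_splits {p : ℝ[X]} (hp : p.Splits)
    (hlead : 0 < p.leadingCoeff) {t : ℝ} (ht : ¬p.IsRoot t) :
    0 < (-1) ^ Multiset.card (p.roots.filter (t < ·)) * p.eval t := by
  rw [hp.eval_eq_prod_roots, mul_left_comm]
  exact mul_pos hlead (p.roots.neg_one_pow_card_filter_lt_mul_prod_sub_pos fun h =>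
    ht (isRoot_of_mem_roots h))

theorem forall_complex_root_eq_ofReal_mem_iff {p : ℝ[X]} (hp : p ≠ 0) (s : Set ℝ) :
    (∀ z : ℂ, (p.map (algebraMap ℝ ℂ)).eval z = 0 → ∃ t : ℝ, z = t ∧ t ∈ s) ↔
      p.Splits ∧ ∀ r ∈ p.roots, r ∈ s := by
  have hmap : p.map (algebraMap ℝ ℂ) ≠ 0 := Polynomial.map_ne_zero hp
  constructor
  · intro h
    refine ⟨(IsAlgClosed.splits (p.map (algebraMap ℝ ℂ))).of_splits_map _ fun z hz => ?_,
      fun r hr => ?_⟩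
    · obtain ⟨t, rfl, -⟩ := h z ((mem_roots hmap).1 hz)
      exact ⟨t, rfl⟩
    · obtain ⟨t, ht, hts⟩ := h r (by
        rw [eval_map_algebraMap, ← Complex.coe_algebraMap, aeval_algebraMap_apply,
          coe_aeval_eq_eval, (mem_roots hp).1 hr, map_zero])
      exact (Complex.ofReal_injective ht) ▸ hts
  · rintro ⟨hsplit, hs⟩ z hz
    rw [← IsRoot.def, ← mem_roots hmap, hsplit.roots_map, Multiset.mem_map] at hz
    obtain ⟨r, hr, rfl⟩ := hz
    exact ⟨r, rfl, hs r hr⟩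

noncomputable def rootCountIcc (p : ℝ[X]) (a b : ℝ) : ℕ :=
  Multiset.card (p.roots.filter (· ∈ Set.Icc a b))

theorem rootCountIcc_anti_left (p : ℝ[X]) {a a' : ℝ} (b : ℝ) (h : a ≤ a') :
    p.rootCountIcc a' b ≤ p.rootCountIcc a b :=
  Multiset.card_le_card <| Multiset.monotone_filter_right _ fun _ hz => ⟨h.trans hz.1, hz.2⟩

theorem rootMultiplicity_le_rootCountIcc (p : ℝ[X]) {a b : ℝ} (hab : a ≤ b) :
    p.rootMultiplicity a ≤ p.rootCountIcc a b := by
  rw [← count_roots, ← Multiset.card_replicate (p.roots.count a) a, ← Multiset.filter_eq']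
  exact Multiset.card_le_card <| Multiset.monotone_filter_right _ fun z hz => by
    subst hz
    exact ⟨le_rfl, hab⟩

theorem rootMultiplicity_add_rootCountIcc_le (p : ℝ[X]) {a a' b : ℝ} (hab : a ≤ b)
    (haa' : a < a') : p.rootMultiplicity a + p.rootCountIcc a' b ≤ p.rootCountIcc a b := by
  rw [← count_roots, ← Multiset.card_replicate (p.roots.count a) a, ← Multiset.filter_eq']
  exact Multiset.card_filter_add_card_filter_le _ (fun z hz h => (hz ▸ haa').not_ge h.1)
    (fun z hz => by subst hz; exact ⟨le_rfl, hab⟩) fun z hz => ⟨haa'.le.trans hz.1, hz.2⟩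

theorem exists_isRoot_Ioo_of_mul_neg (p : ℝ[X]) {a b : ℝ} (hab : a ≤ b)
    (h : p.eval a * p.eval b < 0) : ∃ w ∈ Set.Ioo a b, p.IsRoot w := by
  rcases mul_neg_iff.1 h with ⟨ha, hb⟩ | ⟨ha, hb⟩
  · exact intermediate_value_Ioo' hab p.continuousOn ⟨hb, ha⟩
  · exact intermediate_value_Ioo hab p.continuousOn ⟨ha, hb⟩

section SignAlternation

variable {p : ℝ[X]} {d : ℕ} {x : ℕ → ℝ}

theorem rootMultiplicity_eq_card_filter_add_one
    (hroots : (Icc 1 (d - 1)).val.map x = p.derivative.roots) (hp : p ≠ 0) {t : ℝ}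
    (ht : p.IsRoot t) : p.rootMultiplicity t = #{i ∈ Icc 1 (d - 1) | x i = t} + 1 := by
  have h1 := derivative_rootMultiplicity_of_root ht
  have h2 := (rootMultiplicity_pos hp).2 ht
  rw [← count_roots, ← hroots, Multiset.count_map] at h1
  have h3 : #{i ∈ Icc 1 (d - 1) | x i = t} =
      Multiset.card ((Icc 1 (d - 1)).val.filter (fun i => t = x i)) := by
    rw [card_def, filter_val]
    exact congrArg _ (Multiset.filter_congr fun _ _ => eq_comm)
  omega

-- The correction term is what lets the induction pass repeated critical points `x k = x (k + 1)`.
theorem le_rootCountIcc_of_neg_one_pow_mul_nonneg (hp : p ≠ 0) (hx : MonotoneOn x (Set.Iic d))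
    (hroots : (Icc 1 (d - 1)).val.map x = p.derivative.roots)
    (hsign : ∀ k ≤ d, 0 ≤ (-1) ^ (d - k) * p.eval (x k)) {k : ℕ} (hk : k ≤ d) :
    d - k + (if p.IsRoot (x k) then #{i ∈ Icc 1 k | x i = x k} else 0) ≤
      p.rootCountIcc (x k) (x d) := by
  induction hk using Nat.decreasingInduction with
  | self =>
    rw [Nat.sub_self, zero_add]
    split_ifs with hroot
    · refine le_trans ?_ (p.rootMultiplicity_le_rootCountIcc le_rfl)
      rw [rootMultiplicity_eq_card_filter_add_one hroots hp hroot]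
      rcases d with _ | d
      · simp
      · rw [card_filter_Icc_add_one_right (P := (x · = x (d + 1))) rfl, Nat.add_sub_cancel]
    · exact Nat.zero_le _
  | of_succ k hk ih =>
    have hxk : x k ≤ x (k + 1) := hx (by simp; omega) (by simp; omega) (by omega)
    have hxd : x (k + 1) ≤ x d := hx (by simp; omega) (by simp) hk
    by_cases hrk : p.IsRoot (x k)
    · rw [if_pos hrk]
      rcases hxk.lt_or_eq with hlt | heq
      · have hmult := rootMultiplicity_eq_card_filter_add_one hroots hp hrk
        have hsub : #{i ∈ Icc 1 k | x i = x k} ≤ #{i ∈ Icc 1 (d - 1) | x i = x k} :=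
          card_le_card (filter_subset_filter _ (Icc_subset_Icc le_rfl (by omega)))
        have := p.rootMultiplicity_add_rootCountIcc_le (hlt.le.trans hxd) hlt
        split_ifs at ih <;> omega
      · rw [← heq, if_pos (heq ▸ hrk), card_filter_Icc_add_one_right heq.symm] at ih
        omega
    · rw [if_neg hrk]
      by_cases hrk1 : p.IsRoot (x (k + 1))
      · rw [if_pos hrk1, card_filter_Icc_add_one_right (P := (x · = x (k + 1))) rfl] at ih
        have := p.rootCountIcc_anti_left (x d) hxk
        omega
      · rw [if_neg hrk1] at ih
        have hneg : p.eval (x k) * p.eval (x (k + 1)) < 0 :=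
          mul_neg_of_neg_one_pow_mul_nonneg
            (show d - k = d - (k + 1) + 1 by omega ▸ hsign k hk.le) (hsign (k + 1) hk) hrk hrk1
        obtain ⟨w, hw, hwroot⟩ := p.exists_isRoot_Ioo_of_mul_neg hxk hneg
        have h1 := (rootMultiplicity_pos hp).2 hwroot
        have h2 := p.rootMultiplicity_add_rootCountIcc_le (hw.2.le.trans hxd) hw.2
        have h3 := p.rootCountIcc_anti_left (x d) hw.1.le
        omega

theorem card_roots_derivative_filter_Ioi_le (hx : MonotoneOn x (Set.Iic d))
    (hroots : (Icc 1 (d - 1)).val.map x = p.derivative.roots) {k : ℕ} (hk : k ≤ d) :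
    Multiset.card (p.derivative.roots.filter (· ∈ Set.Ioi (x k))) ≤ d - 1 - k := by
  rw [← hroots, Multiset.filter_map, Multiset.card_map, ← filter_val, ← card_def]
  refine (card_le_card (t := Icc (k + 1) (d - 1)) fun i hi => ?_).trans (by simp)
  rw [mem_filter, mem_Icc] at hi
  have : k < i := lt_of_not_ge fun hik => (hx (by simp; omega) (by simp; omega) hik).not_gt hi.2
  exact mem_Icc.2 ⟨this, hi.1.2⟩

theorem card_roots_derivative_filter_Iio_le (hx : MonotoneOn x (Set.Iic d))
    (hroots : (Icc 1 (d - 1)).val.map x = p.derivative.roots) {k : ℕ} (hk : k ≤ d) :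
    Multiset.card (p.derivative.roots.filter (· ∈ Set.Iio (x k))) ≤ k - 1 := by
  rw [← hroots, Multiset.filter_map, Multiset.card_map, ← filter_val, ← card_def]
  refine (card_le_card (t := Icc 1 (k - 1)) fun i hi => ?_).trans (by simp)
  rw [mem_filter, mem_Icc] at hi
  have : i < k := lt_of_not_ge fun hki => (hx (by simp; omega) (by simp; omega) hki).not_gt hi.2
  exact mem_Icc.2 ⟨hi.1.1, by omega⟩

theorem card_roots_filter_gt_eq_sub (hsplit : p.Splits) (hdeg : p.natDegree = d)
    (hmem : ∀ r ∈ p.roots, r ∈ Set.Icc (x 0) (x d)) (hx : MonotoneOn x (Set.Iic d))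
    (hroots : (Icc 1 (d - 1)).val.map x = p.derivative.roots) {k : ℕ} (hk : k ≤ d)
    (hroot : ¬p.IsRoot (x k)) : Multiset.card (p.roots.filter (x k < ·)) = d - k := by
  have hsum : Multiset.card (p.roots.filter (· ∈ Set.Ioi (x k))) +
      Multiset.card (p.roots.filter (· ∈ Set.Iio (x k))) = d := by
    rw [← Multiset.card_add, ← hdeg, hsplit.natDegree_eq_card_roots]
    conv_rhs => rw [← Multiset.filter_add_not (· ∈ Set.Ioi (x k)) p.roots]
    refine congrArg _ (congrArg _ (Multiset.filter_congr fun z hz => ?_))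
    have hzk : z ≠ x k := fun h => hroot (h ▸ isRoot_of_mem_roots hz)
    simp only [Set.mem_Ioi, Set.mem_Iio, not_lt]
    exact ⟨le_of_lt, fun h => lt_of_le_of_ne h hzk⟩
  have habove : Multiset.card (p.roots.filter (· ∈ Set.Ioi (x k))) ≤ d - k := by
    obtain rfl | hkd := eq_or_lt_of_le hk
    · rw [(Multiset.filter_eq_nil (p := (· ∈ Set.Ioi (x k)))).2
        fun z hz h => (hmem z hz).2.not_gt h]
      simp
    have := card_roots_derivative_filter_Ioi_le hx hroots hk
    have := p.card_roots_filter_le_derivative Set.ordConnected_Ioi (s := Set.Ioi (x k))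
    omega
  have hbelow : Multiset.card (p.roots.filter (· ∈ Set.Iio (x k))) ≤ k := by
    obtain rfl | hk0 := Nat.eq_zero_or_pos k
    · rw [(Multiset.filter_eq_nil (p := (· ∈ Set.Iio (x 0)))).2
        fun z hz h => (hmem z hz).1.not_gt h]
      simp
    have := card_roots_derivative_filter_Iio_le hx hroots hk
    have := p.card_roots_filter_le_derivative Set.ordConnected_Iio (s := Set.Iio (x k))
    omega
  change Multiset.card (p.roots.filter (· ∈ Set.Ioi (x k))) = d - k
  omega

theorem splits_and_roots_mem_Icc_iff (hlead : 0 < p.leadingCoeff) (hdeg : p.natDegree = d)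
    (hx : MonotoneOn x (Set.Iic d)) (hroots : (Icc 1 (d - 1)).val.map x = p.derivative.roots) :
    (p.Splits ∧ ∀ r ∈ p.roots, r ∈ Set.Icc (x 0) (x d)) ↔
      ∀ k ≤ d, 0 ≤ (-1) ^ (d - k) * p.eval (x k) := by
  have hp : p ≠ 0 := leadingCoeff_ne_zero.1 hlead.ne'
  constructor
  · rintro ⟨hsplit, hmem⟩ k hk
    by_cases hroot : p.IsRoot (x k)
    · rw [hroot.eq_zero, mul_zero]
    have hpos := neg_one_pow_mul_eval_pos_of_splits hsplit hlead hroot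
    rw [card_roots_filter_gt_eq_sub hsplit hdeg hmem hx hroots hk hroot] at hpos
    exact hpos.le
  · intro hsign
    have hcount : d ≤ p.rootCountIcc (x 0) (x d) := (Nat.le_add_right d _).trans
      (le_rootCountIcc_of_neg_one_pow_mul_nonneg hp hx hroots hsign (Nat.zero_le d))
    have hcard : Multiset.card p.roots ≤ d := hdeg ▸ card_roots' p
    have hfilter : p.roots.filter (· ∈ Set.Icc (x 0) (x d)) = p.roots :=
      Multiset.eq_of_le_of_card_le (Multiset.filter_le _ _) (hcard.trans hcount)
    refine ⟨splits_iff_card_roots.2 (hdeg ▸ le_antisymm hcard ?_),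
      fun r hr => (Multiset.mem_filter.1 (hfilter ▸ hr)).2⟩
    exact hcount.trans (Multiset.card_le_card (Multiset.filter_le _ _))

end SignAlternation

end Polynomial

theorem shift_root_criterion_general (q : ℝ) (d : ℕ) (hd : 1 ≤ d)
    (R : Polynomial ℝ) (hdeg : R.natDegree = d) (hlead : 0 < R.leadingCoeff)
    -- R' has all roots real and lying in [-2√q, 2√q]
    (hroots' : ∀ z : ℂ, (R.derivative.map (algebraMap ℝ ℂ)).eval z = 0 →
      ∃ t : ℝ, z = (t : ℂ) ∧ -(2 * Real.sqrt q) ≤ t ∧ t ≤ 2 * Real.sqrt q)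
    (x : ℕ → ℝ) (hx0 : x 0 = -(2 * Real.sqrt q)) (hxd : x d = 2 * Real.sqrt q)
    -- x₁ ≤ ⋯ ≤ x_{d-1} are the roots of R' counted with multiplicity
    (hmono : ∀ i j : ℕ, 1 ≤ i → i ≤ j → j ≤ d - 1 → x i ≤ x j)
    (hxroots : (Finset.Icc 1 (d - 1)).val.map x = R.derivative.roots)
    (c : ℝ) :
    (∀ z : ℂ, ((R + C c).map (algebraMap ℝ ℂ)).eval z = 0 →
        ∃ t : ℝ, z = (t : ℂ) ∧ -(2 * Real.sqrt q) ≤ t ∧ t ≤ 2 * Real.sqrt q) ↔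
      ((∀ i : ℕ, i ≤ d / 2 → 0 ≤ R.eval (x (d - 2 * i)) + c) ∧
        (∀ i : ℕ, i ≤ (d - 1) / 2 → R.eval (x (d - 1 - 2 * i)) + c ≤ 0)) := by
  have h0d : x 0 ≤ x d := by rw [hx0, hxd]; linarith [Real.sqrt_nonneg q]
  rw [← hx0, ← hxd] at hroots' ⊢
  have hR' : R.derivative ≠ 0 := fun h => by
    rw [eq_C_of_derivative_eq_zero h, natDegree_C] at hdeg
    omega
  have hbound (i : ℕ) (hi : 1 ≤ i) (hid : i ≤ d - 1) : x 0 ≤ x i ∧ x i ≤ x d :=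
    ((forall_complex_root_eq_ofReal_mem_iff hR' (Set.Icc (x 0) (x d))).1 hroots').2 (x i)
      (hxroots ▸ Multiset.mem_map_of_mem x (by simp; omega))
  have hx : MonotoneOn x (Set.Iic d) := monotoneOn_Iic_of_endpoints hmono hbound h0d
  have hdegS : (R + C c).natDegree = d := by rw [natDegree_add_C, hdeg]
  have hleadS : 0 < (R + C c).leadingCoeff := by
    rwa [leadingCoeff_add_of_degree_lt'
      (degree_C_le.trans_lt (natDegree_pos_iff_degree_pos.1 (by omega)))]
  have hrootsS : (Icc 1 (d - 1)).val.map x = (R + C c).derivative.roots := by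
    rw [derivative_add, derivative_C, add_zero, hxroots]
  refine (forall_complex_root_eq_ofReal_mem_iff (leadingCoeff_ne_zero.1 hleadS.ne') _).trans
    ((splits_and_roots_mem_Icc_iff hleadS hdegS hx hrootsS).trans ?_)
  simp only [eval_add, eval_C]
  exact forall_le_neg_one_pow_sub_mul_nonneg_iff hd

theorem shift_root_criterion (q : ℝ) (hq : 0 < q) (d : ℕ) (hd : 1 ≤ d)
    (R : Polynomial ℝ) (hdeg : R.natDegree = d) (hlead : 0 < R.leadingCoeff)
    -- R' has all roots real and lying in [-2√q, 2√q]
    (hroots' : ∀ z : ℂ, (R.derivative.map (algebraMap ℝ ℂ)).eval z = 0 →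
      ∃ t : ℝ, z = (t : ℂ) ∧ -(2 * Real.sqrt q) ≤ t ∧ t ≤ 2 * Real.sqrt q)
    (x : ℕ → ℝ) (hx0 : x 0 = -(2 * Real.sqrt q)) (hxd : x d = 2 * Real.sqrt q)
    -- x₁ ≤ ⋯ ≤ x_{d-1} are the roots of R' counted with multiplicity
    (hmono : ∀ i j : ℕ, 1 ≤ i → i ≤ j → j ≤ d - 1 → x i ≤ x j)
    (hxroots : (Finset.Icc 1 (d - 1)).val.map x = R.derivative.roots)
    (c : ℝ) :
    (∀ z : ℂ, ((R + C c).map (algebraMap ℝ ℂ)).eval z = 0 →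
        ∃ t : ℝ, z = (t : ℂ) ∧ -(2 * Real.sqrt q) ≤ t ∧ t ≤ 2 * Real.sqrt q) ↔
      ((∀ i : ℕ, i ≤ d / 2 → 0 ≤ R.eval (x (d - 2 * i)) + c) ∧
        (∀ i : ℕ, i ≤ (d - 1) / 2 → R.eval (x (d - 1 - 2 * i)) + c ≤ 0)) :=
  shift_root_criterion_general q d hd R hdeg hlead hroots' x hx0 hxd hmono hxroots c
end
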